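/- arXiv:1909.06698 — 4 statements merged into one kernel-verified Lean document; each statement's English description precedes it below -/
import Mathlib

section
/- Let k, t, n be integers with 2 ≤ k ≤ t ≤ n−1, and let G be a t-edge-connected simple graph of order n. Then the minimum degree of F_k(G) satisfies δ(F_k(G)) ≥ k(t−k+1). -/
open Finset SimpleGraph

open scoped Classical

variable {V : Type*}

/-- The `k`-token graph of `G`: vertices are the `k`-subsets of `V(G)`, two of them
adjacent iff their symmetric difference is a pair of adjacent vertices of `G`. -/
def tokenGraph [DecidableEq V] (G : SimpleGraph V) (k : ℕ) :
    SimpleGraph {s : Finset V // s.card = k} :=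
  SimpleGraph.fromRel fun A B => ∃ a b, G.Adj a b ∧ symmDiff A.1 B.1 = {a, b}

/-- `G` is `t`-edge-connected: removing fewer than `t` edges leaves it connected. -/
def EdgeConnected (G : SimpleGraph V) (t : ℕ) : Prop :=
  ∀ F : Finset (Sym2 V), F.card < t → (G.deleteEdges (F : Set (Sym2 V))).Connected

/-- Edge-connectivity `λ(G)`. -/
noncomputable def edgeConn (G : SimpleGraph V) : ℕ :=
  sSup {t | EdgeConnected G t}

/-- `G` is `t`-vertex-connected. -/
def VertexConnected [Fintype V] (G : SimpleGraph V) (t : ℕ) : Prop :=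
  t < Fintype.card V ∧
    ∀ S : Finset V, S.card < t → (G.induce ((↑(Sᶜ) : Set V))).Connected

/-- Vertex-connectivity `κ(G)`. -/
noncomputable def vertexConn [Fintype V] (G : SimpleGraph V) : ℕ :=
  sSup {t | VertexConnected G t}

/-! In a `t`-edge-connected graph on more than `t` vertices every vertex has degree at least `t`.
Moving one token of a `k`-set `A` from `a ∈ A` to a neighbour `b ∉ A` gives a neighbour of `A`
in `F_k(G)`, and distinct moves give distinct neighbours because the symmetric difference `{a, b}`
recovers the move. Each `a ∈ A` has at most `k - 1` neighbours inside `A`, hence at least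
`t - k + 1` outside, so `A` has at least `k (t - k + 1)` neighbours. -/

theorem Finset.card_insert_erase_of_mem_of_notMem {α : Type*} [DecidableEq α] {s : Finset α}
    {a b : α} (ha : a ∈ s) (hb : b ∉ s) : #(insert b (s.erase a)) = #s := by
  rw [card_insert_of_notMem fun h => hb (mem_of_mem_erase h), card_erase_add_one ha]

theorem Finset.symmDiff_insert_erase {α : Type*} [DecidableEq α] {s : Finset α} {a b : α}
    (ha : a ∈ s) (hb : b ∉ s) : symmDiff s (insert b (s.erase a)) = {a, b} := by
  ext x
  simp only [mem_symmDiff, mem_insert, mem_erase, mem_singleton]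
  grind

theorem Finset.eq_and_eq_of_insert_erase_eq {α : Type*} [DecidableEq α] {s : Finset α}
    {a b a' b' : α} (ha : a ∈ s) (hb : b ∉ s) (ha' : a' ∈ s) (hb' : b' ∉ s)
    (h : insert b (s.erase a) = insert b' (s.erase a')) : a = a' ∧ b = b' := by
  have hpair : ({a, b} : Finset α) = {a', b'} := by
    rw [← symmDiff_insert_erase ha hb, ← symmDiff_insert_erase ha' hb', h]
  have ha_mem : a ∈ ({a', b'} : Finset α) := hpair ▸ mem_insert_self a {b}
  have hb_mem : b ∈ ({a', b'} : Finset α) := hpair ▸ mem_insert_of_mem (mem_singleton_self b)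
  simp only [mem_insert, mem_singleton] at ha_mem hb_mem
  grind

theorem EdgeConnected.le_degree [Fintype V] {G : SimpleGraph V} {t : ℕ}
    (hG : EdgeConnected G t) (ht : t < Fintype.card V) (v : V) : t ≤ G.degree v := by
  by_contra! h
  have : Nontrivial V := Fintype.one_lt_card_iff_nontrivial.mp (by omega)
  obtain ⟨w, hw⟩ := exists_ne v
  have hconn := hG (G.incidenceFinset v) (by rwa [card_incidenceFinset_eq_degree])
  obtain ⟨p⟩ := hconn.preconnected v w
  cases p with
  | nil => exact hw rfl
  | cons hadj _ =>
    -- every edge at `v` has been deleted, so a walk cannot leave `v`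
    rw [deleteEdges_adj] at hadj
    exact hadj.2 (by simpa using hadj.1)

namespace SimpleGraph

variable [DecidableEq V]

theorem degree_add_one_le_card_neighborFinset_sdiff_add_card [Fintype V] (G : SimpleGraph V)
    {A : Finset V} {a : V} (ha : a ∈ A) : G.degree a + 1 ≤ #(G.neighborFinset a \ A) + #A := by
  have hsub : G.neighborFinset a ⊆ (G.neighborFinset a \ A) ∪ A.erase a := by
    intro x hx
    by_cases hxA : x ∈ A
    · have hxa : x ≠ a := (G.ne_of_adj ((mem_neighborFinset ..).mp hx)).symm
      exact mem_union_right _ (mem_erase.mpr ⟨hxa, hxA⟩)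
    · exact mem_union_left _ (mem_sdiff.mpr ⟨hx, hxA⟩)
  have := (card_le_card hsub).trans (card_union_le _ _)
  rw [card_neighborFinset_eq_degree] at this
  have := card_erase_add_one ha
  omega

variable {G : SimpleGraph V} {k : ℕ}

theorem tokenGraph_adj_of_insert_erase {A B : {s : Finset V // s.card = k}} {a b : V}
    (ha : a ∈ A.1) (hb : b ∉ A.1) (hab : G.Adj a b) (hB : B.1 = insert b (A.1.erase a)) :
    (tokenGraph G k).Adj A B := by
  rw [tokenGraph, fromRel_adj]
  refine ⟨?_, Or.inl ⟨a, b, hab, by rw [hB, symmDiff_insert_erase ha hb]⟩⟩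
  rintro rfl
  exact hb (hB ▸ mem_insert_self b _)

theorem sum_card_neighborFinset_sdiff_le_degree_tokenGraph [Fintype V]
    (A : {s : Finset V // s.card = k}) :
    ∑ a ∈ A.1, #(G.neighborFinset a \ A.1) ≤ (tokenGraph G k).degree A := by
  rw [← card_sigma, degree, ← card_map (Function.Embedding.subtype _)]
  refine card_le_card_of_injOn (fun p => insert p.2 (A.1.erase p.1)) ?_ ?_
  · rintro ⟨a, b⟩ hp
    simp only [coe_sigma, Set.mem_sigma_iff, mem_coe, mem_sdiff, mem_neighborFinset] at hp
    obtain ⟨ha, hab, hb⟩ := hp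
    have hcard : #(insert b (A.1.erase a)) = k := by
      rw [card_insert_erase_of_mem_of_notMem ha hb, A.2]
    simp only [coe_map, Function.Embedding.subtype_apply, Set.mem_image, mem_coe,
      mem_neighborFinset]
    exact ⟨⟨_, hcard⟩, tokenGraph_adj_of_insert_erase ha hb hab rfl, rfl⟩
  · rintro ⟨a, b⟩ hp ⟨a', b'⟩ hp' h
    simp only [coe_sigma, Set.mem_sigma_iff, mem_coe, mem_sdiff, mem_neighborFinset] at hp hp'
    obtain ⟨rfl, rfl⟩ := eq_and_eq_of_insert_erase_eq hp.1 hp.2.2 hp'.1 hp'.2.2 h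
    rfl

end SimpleGraph

theorem stmt2_general [Fintype V] [DecidableEq V] (G : SimpleGraph V) (n t k : ℕ)
    (hn : Fintype.card V = n) (hkt : k ≤ t) (htn : t ≤ n - 1)
    (hG : EdgeConnected G t) :
    k * (t - k + 1) ≤ (tokenGraph G k).minDegree := by
  subst hn
  obtain ⟨s, -, hs⟩ := exists_subset_card_eq (s := (univ : Finset V)) (n := k) (by simp; omega)
  have : Nonempty {s : Finset V // s.card = k} := ⟨⟨s, hs⟩⟩
  refine le_minDegree_of_forall_le_degree _ _ fun A => ?_
  calc k * (t - k + 1) = ∑ _a ∈ A.1, (t - k + 1) := by rw [sum_const, A.2, smul_eq_mul]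
    _ ≤ ∑ a ∈ A.1, #(G.neighborFinset a \ A.1) := sum_le_sum fun a ha => by
        have hdeg := hG.le_degree (by have := Fintype.card_pos_iff.2 ⟨a⟩; omega) a
        have := G.degree_add_one_le_card_neighborFinset_sdiff_add_card ha
        rw [A.2] at this
        omega
    _ ≤ (tokenGraph G k).degree A := sum_card_neighborFinset_sdiff_le_degree_tokenGraph A

theorem stmt2 [Fintype V] [DecidableEq V] (G : SimpleGraph V) (n t k : ℕ)
    (hn : Fintype.card V = n) (h2k : 2 ≤ k) (hkt : k ≤ t) (htn : t ≤ n - 1)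
    (hG : EdgeConnected G t) :
    k * (t - k + 1) ≤ (tokenGraph G k).minDegree :=
  stmt2_general G n t k hn hkt htn hG
end

section
/- Let X be a k-subset of V(G) and let P be a path of G from x to y with x ∈ X and y ∉ X, directed from x to y. Then there is a path in F_k(G) from X to Y := (X\{x}) ∪ {y} having the same length as P, all of whose edges correspond to edges of P. -/
open Finset SimpleGraph

open scoped Classical

variable {V : Type*}

/-! Induct on the path `x v ⋯ y`. If `v` carries a token, first move that token to `y` along
the rest of the path and then slide the token at `x` into the vacated `v`; if `v` is free,
slide the token at `x` to `v` first and continue from `v`. Each step moves one token along one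
edge of the path, so the token walk has as many steps as the path. -/

namespace Finset

variable [DecidableEq V] {x v y : V} {X : Finset V}

lemma card_insert_erase (hx : x ∈ X) (hy : y ∉ X.erase x) :
    (insert y (X.erase x)).card = X.card := by
  rw [card_insert_of_notMem hy, card_erase_add_one hx]

lemma sdiff_insert_erase (hx : x ∈ X) (hxv : x ≠ v) : X \ insert v (X.erase x) = {x} := by
  ext a; simp only [mem_sdiff, mem_insert, mem_erase, mem_singleton]; grind

lemma insert_erase_sdiff (hv : v ∉ X) : insert v (X.erase x) \ X = {v} := by
  ext a; simp only [mem_sdiff, mem_insert, mem_erase, mem_singleton]; grind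

lemma insert_erase_sdiff_insert_erase (hx : x ∈ X) (hxv : x ≠ v) (hy : y ∉ X) :
    insert y (X.erase v) \ insert y (X.erase x) = {x} := by
  ext a; simp only [mem_sdiff, mem_insert, mem_erase, mem_singleton]; grind

end Finset

namespace tokenGraph

variable [DecidableEq V] {G : SimpleGraph V} {k : ℕ}

lemma adj_of_sdiff {A B : {s : Finset V // s.card = k}} {a b : V} (hab : G.Adj a b)
    (hA : A.1 \ B.1 = {a}) (hB : B.1 \ A.1 = {b}) : (tokenGraph G k).Adj A B := by
  refine ⟨fun hAB => by simp [hAB] at hA, Or.inl ⟨a, b, hab, ?_⟩⟩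
  rw [symmDiff_def, hA, hB, sup_eq_union, ← insert_eq]

lemma sym2_eq_of_sdiff {A B S T : {s : Finset V // s.card = k}} {a b c d : V}
    (h : s(A, B) = s(S, T)) (hA : A.1 \ B.1 = {a}) (hB : B.1 \ A.1 = {b})
    (hS : S.1 \ T.1 = {c}) (hT : T.1 \ S.1 = {d}) : s(a, b) = s(c, d) := by
  rcases Sym2.eq_iff.mp h with ⟨rfl, rfl⟩ | ⟨rfl, rfl⟩
  · rw [singleton_inj.mp (hA.symm.trans hS), singleton_inj.mp (hB.symm.trans hT)]
  · rw [singleton_inj.mp (hA.symm.trans hT), singleton_inj.mp (hB.symm.trans hS), Sym2.eq_swap]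

end tokenGraph

open tokenGraph in
theorem exists_tokenGraph_walk_of_isPath [DecidableEq V] {G : SimpleGraph V} {k : ℕ} :
    ∀ {x y : V} (P : G.Walk x y), P.IsPath →
      ∀ (X : Finset V) (hX : X.card = k) (hx : x ∈ X) (hy : y ∉ X.erase x),
      -- `hy` allows `y = x`, so that the trivial path is the base case.
      ∃ W : (tokenGraph G k).Walk ⟨X, hX⟩
          ⟨insert y (X.erase x), (card_insert_erase hx hy).trans hX⟩,
        W.length = P.length ∧
        ∀ A B a b, s(A, B) ∈ W.edges →
          A.1 \ B.1 = {a} → B.1 \ A.1 = {b} → s(a, b) ∈ P.edges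
  | _, _, .nil, _, _, _, hx, _ =>
    ⟨Walk.nil.copy rfl (Subtype.ext (insert_erase hx).symm), by simp, by simp⟩
  | x, y, .cons (v := v) h p, hP, X, hX, hx, hy => by
    obtain ⟨hp, hxp⟩ := (Walk.cons_isPath_iff h p).mp hP
    have hyx : y ≠ x := fun e => hxp (e ▸ p.end_mem_support)
    by_cases hvX : v ∈ X
    · have hyX : y ∉ X := fun hyX => hy (mem_erase.mpr ⟨hyx, hyX⟩)
      obtain ⟨W, hlen, hW⟩ :=
        exists_tokenGraph_walk_of_isPath p hp X hX hvX (fun h => hyX (mem_of_mem_erase h))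
      have hA := insert_erase_sdiff_insert_erase hx h.ne hyX
      have hB := insert_erase_sdiff_insert_erase hvX h.ne.symm hyX
      refine ⟨W.concat (adj_of_sdiff h hA hB), by simp [hlen], ?_⟩
      intro A B a b hAB hA' hB'
      rw [Walk.edges_concat, List.concat_eq_append, List.mem_append, List.mem_singleton] at hAB
      rcases hAB with hAB | hAB
      · exact List.mem_cons_of_mem _ (hW A B a b hAB hA' hB')
      · simp [sym2_eq_of_sdiff hAB hA' hB' hA hB]
    · have hvX' : v ∉ X.erase x := fun h => hvX (mem_of_mem_erase h)
      have hX' := (card_insert_erase hx hvX').trans hX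
      obtain ⟨W, hlen, hW⟩ := exists_tokenGraph_walk_of_isPath p hp _ hX' (mem_insert_self _ _)
        (by rwa [erase_insert hvX'])
      have hA := sdiff_insert_erase hx h.ne
      have hB := insert_erase_sdiff (x := x) hvX
      have hY := congrArg (insert y) (erase_insert hvX')
      refine ⟨.cons (adj_of_sdiff h hA hB) (W.copy rfl (Subtype.ext hY)), by simp [hlen], ?_⟩
      intro A B a b hAB hA' hB'
      rw [Walk.edges_cons, Walk.edges_copy, List.mem_cons] at hAB
      rcases hAB with hAB | hAB
      · simp [sym2_eq_of_sdiff hAB hA' hB' hA hB]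
      · exact List.mem_cons_of_mem _ (hW A B a b hAB hA' hB')

theorem stmt12 [DecidableEq V] (G : SimpleGraph V) (k : ℕ)
    (X : Finset V) (hX : X.card = k) {x y : V}
    (P : G.Walk x y) (hP : P.IsPath) (hx : x ∈ X) (hy : y ∉ X) :
    ∃ hY : (insert y (X.erase x)).card = k,
      ∃ W : (tokenGraph G k).Walk ⟨X, hX⟩ ⟨insert y (X.erase x), hY⟩,
        W.length = P.length ∧
        ∀ A B a b, s(A, B) ∈ W.edges →
          A.1 \ B.1 = {a} → B.1 \ A.1 = {b} → s(a, b) ∈ P.edges :=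
  ⟨_, exists_tokenGraph_walk_of_isPath P hP X hX hx fun h => hy (mem_of_mem_erase h)⟩
end

section
/- For the complete graph K_{t+1} and any k with 2 ≤ k ≤ t, the edge-connectivity of the k-token graph satisfies λ(F_k(K_{t+1})) = k(t−k+1). -/
open Finset SimpleGraph

open scoped Classical

variable {V : Type*}

/-
The upper bound is the degree `k(n-k)`: deleting the edges at one vertex isolates it. For the lower
bound, every nonempty proper family `S` of `k`-subsets of an `n`-set `W` has at least `k(n-k)`
exchange edges leaving it. By induction on `W`: pick `x ∈ A₀ \ B₀` with `A₀ ∈ S`, `B₀ ∉ S`. The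
`k`-sets avoiding `x` form `J(W - x, k)`, those containing `x` form a copy of `J(W - x, k - 1)`.
If `S` splits both halves properly, induction gives `k(n-1-k) + (k-1)(n-k) ≥ k(n-k)` edges.
Otherwise `S` or its complement lies inside one half, and each of its members has `k` (resp. `n-k`)
exchange edges into the other half; together with the induction hypothesis for that half (or, if it
fills the half, a lower bound on its size) this makes `k(n-k)`.
-/

section EdgeCut

variable {β : Type*} [Fintype β] [DecidableEq β] {G : SimpleGraph β} [DecidableRel G.Adj]

theorem EdgeConnected.le_card_interedges {m : ℕ} (hG : EdgeConnected G m) {S : Finset β}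
    (hS : S.Nonempty) (hSc : Sᶜ.Nonempty) : m ≤ #(G.interedges S Sᶜ) := by
  by_contra! hlt
  set F := (G.interedges S Sᶜ).image fun e => s(e.1, e.2)
  obtain ⟨u, hu⟩ := hS
  obtain ⟨v, hv⟩ := hSc
  obtain ⟨p⟩ := (hG F (card_image_le.trans_lt hlt)).preconnected u v
  obtain ⟨d, -, hd₁, hd₂⟩ := p.exists_boundary_dart (S : Set β) hu (by simpa using hv)
  have hd := deleteEdges_adj.1 d.adj
  exact hd.2 (mem_image.2
    ⟨(d.fst, d.snd), G.mk_mem_interedges_iff.2 ⟨hd₁, by simpa using hd₂, hd.1⟩, rfl⟩)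

theorem edgeConnected_of_le_card_interedges [Nonempty β] {m : ℕ}
    (h : ∀ S : Finset β, S.Nonempty → Sᶜ.Nonempty → m ≤ #(G.interedges S Sᶜ)) :
    EdgeConnected G m := by
  intro F hF
  set G' := G.deleteEdges F
  obtain ⟨u⟩ := ‹Nonempty β›
  rw [connected_iff_exists_forall_reachable]
  refine ⟨u, fun v => by_contra fun huv => ?_⟩
  set S := univ.filter (G'.Reachable u)
  have hcut : #(G.interedges S Sᶜ) ≤ #F := by
    refine card_le_card_of_injOn (fun e => s(e.1, e.2)) (fun e he => ?_) (fun e he e' he' h => ?_)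
    · obtain ⟨h₁, h₂, hadj⟩ := G.mem_interedges_iff.1 he
      simp only [S, mem_compl, mem_filter, mem_univ, true_and] at h₁ h₂
      by_contra heF
      exact h₂ (h₁.trans (deleteEdges_adj.2 ⟨hadj, heF⟩).reachable)
    · obtain ⟨h₁, -, -⟩ := G.mem_interedges_iff.1 (mem_coe.1 he)
      obtain ⟨-, h₂', -⟩ := G.mem_interedges_iff.1 (mem_coe.1 he')
      rcases Sym2.eq_iff.1 h with ⟨h₁₁, h₂₂⟩ | ⟨h₁₂, -⟩
      · exact Prod.ext h₁₁ h₂₂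
      · exact absurd (h₁₂ ▸ h₁) (mem_compl.1 h₂')
  have := h S ⟨u, by simp [S]⟩ ⟨v, by simpa [S] using huv⟩
  omega

end EdgeCut

section Interedges

variable {β : Type*} {G : SimpleGraph β} [DecidableRel G.Adj]
  {P : β → Prop} [DecidablePred P] {S T L L' : Finset β}

theorem sum_card_le_card_filter_interedges (N : β → Finset β)
    (hN : ∀ A ∈ S, ∀ B ∈ N A, B ∈ T ∧ G.Adj A B ∧ P B) :
    ∑ A ∈ S, #(N A) ≤ #((G.interedges S T).filter fun e => P e.2) := by
  rw [← card_sigma]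
  refine card_le_card_of_injOn (fun e => (e.1, e.2)) (fun e he => ?_) ?_
  · obtain ⟨hA, hB⟩ := mem_sigma.1 he
    obtain ⟨hT, hadj, hP⟩ := hN _ hA _ hB
    exact mem_filter.2 ⟨G.mk_mem_interedges_iff.2 ⟨hA, hT, hadj⟩, hP⟩
  · rintro ⟨A, B⟩ - ⟨A', B'⟩ - h
    obtain ⟨rfl, rfl⟩ := Prod.mk.inj h
    rfl

theorem card_interedges_comap_le [DecidableEq β] (f : β → β) (hf : ∀ A ∈ L', f A ∈ L ∧ P (f A))
    (hinj : Set.InjOn f L') (hadj : ∀ A ∈ L', ∀ B ∈ L', G.Adj A B → G.Adj (f A) (f B)) :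
    #(G.interedges (L'.filter (f · ∈ S)) (L' \ L'.filter (f · ∈ S))) ≤
      #((G.interedges S (L \ S)).filter fun e => P e.2) := by
  refine card_le_card_of_injOn (Prod.map f f) (fun e he => ?_) (fun e he e' he' h => ?_)
  · obtain ⟨h₁, h₂, hadj'⟩ := G.mem_interedges_iff.1 he
    rw [mem_filter] at h₁
    rw [mem_sdiff, mem_filter, not_and] at h₂
    refine mem_filter.2 ⟨G.mem_interedges_iff.2 ⟨h₁.2, ?_, hadj _ h₁.1 _ h₂.1 hadj'⟩, (hf _ h₂.1).2⟩
    exact mem_sdiff.2 ⟨(hf _ h₂.1).1, h₂.2 h₂.1⟩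
  · obtain ⟨h₁, h₂, -⟩ := G.mem_interedges_iff.1 (mem_coe.1 he)
    obtain ⟨h₁', h₂', -⟩ := G.mem_interedges_iff.1 (mem_coe.1 he')
    exact Prod.ext (hinj (mem_filter.1 h₁).1 (mem_filter.1 h₁').1 (congrArg Prod.fst h))
      (hinj (mem_sdiff.1 h₂).1 (mem_sdiff.1 h₂').1 (congrArg Prod.snd h))

end Interedges

section Johnson

variable {α : Type*} [DecidableEq α]

/-- On the `k`-subsets of `W` this induces the Johnson graph `J(#W, k)`, i.e. the `k`-token graph
of the complete graph on `W`. -/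
def johnsonGraph (α : Type*) [DecidableEq α] : SimpleGraph (Finset α) where
  Adj A B := #(A \ B) = 1 ∧ #(B \ A) = 1
  symm := ⟨fun _ _ h => h.symm⟩
  loopless := ⟨fun A h => by simp at h⟩

variable {W A B : Finset α} {k : ℕ} {a x y : α}

@[simp]
theorem johnsonGraph_adj : (johnsonGraph α).Adj A B ↔ #(A \ B) = 1 ∧ #(B \ A) = 1 := Iff.rfl

instance : DecidableRel (johnsonGraph α).Adj := fun _ _ => decidable_of_iff _ johnsonGraph_adj.symm

theorem sdiff_nonempty_of_card_eq_of_ne (h : #A = #B) (hAB : A ≠ B) : (A \ B).Nonempty :=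
  sdiff_nonempty.2 fun hsub => hAB (eq_of_subset_of_card_le hsub h.ge)

theorem sdiff_insert_erase_self (ha : a ∈ A) (hy : y ∉ A) : A \ insert y (A.erase a) = {a} := by
  ext c; grind

theorem insert_erase_sdiff_self (hy : y ∉ A) : insert y (A.erase a) \ A = {y} := by
  ext c; grind

theorem johnsonGraph_adj_insert_erase (ha : a ∈ A) (hy : y ∉ A) :
    (johnsonGraph α).Adj A (insert y (A.erase a)) := by
  simp [sdiff_insert_erase_self ha hy, insert_erase_sdiff_self hy]

theorem insert_erase_mem_powersetCard (hA : A ∈ W.powersetCard k) (ha : a ∈ A) (hyW : y ∈ W)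
    (hy : y ∉ A) : insert y (A.erase a) ∈ W.powersetCard k := by
  rw [mem_powersetCard] at hA ⊢
  refine ⟨insert_subset hyW ((erase_subset a A).trans hA.1), ?_⟩
  rw [card_insert_of_notMem (fun h => hy (mem_of_mem_erase h)), card_erase_of_mem ha, hA.2]
  exact Nat.succ_pred_eq_of_pos (hA.2 ▸ card_pos.2 ⟨a, ha⟩)

theorem exists_eq_insert_erase_of_johnsonGraph_adj (h : (johnsonGraph α).Adj A B) :
    ∃ a ∈ A, ∃ y ∉ A, B = insert y (A.erase a) := by
  obtain ⟨a, ha⟩ := card_eq_one.1 (johnsonGraph_adj.1 h).1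
  obtain ⟨y, hy⟩ := card_eq_one.1 (johnsonGraph_adj.1 h).2
  have hA : ∀ c, c ∈ A ∧ c ∉ B ↔ c = a := fun c => by rw [← mem_sdiff, ha, mem_singleton]
  have hB : ∀ c, c ∈ B ∧ c ∉ A ↔ c = y := fun c => by rw [← mem_sdiff, hy, mem_singleton]
  refine ⟨a, ((hA a).2 rfl).1, y, ((hB y).2 rfl).2, ?_⟩
  ext c
  grind

end Johnson

section JohnsonCut

variable {α : Type*} [DecidableEq α] {W A B : Finset α} {k : ℕ} {x : α} {S : Finset (Finset α)}

def johnsonCut (W : Finset α) (k : ℕ) (S : Finset (Finset α)) : Finset (Finset α × Finset α) :=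
  (johnsonGraph α).interedges S (W.powersetCard k \ S)

theorem card_johnsonCut_sdiff (hS : S ⊆ W.powersetCard k) :
    #(johnsonCut W k (W.powersetCard k \ S)) = #(johnsonCut W k S) := by
  have := (johnsonGraph α).symm
  rw [johnsonCut, johnsonCut, Finset.sdiff_sdiff_eq_self hS]
  exact Rel.card_interedges_comm _ _

theorem card_image_insert_erase (hx : x ∉ A) : #(A.image fun a => insert x (A.erase a)) = #A := by
  refine card_image_of_injOn fun a ha b hb h => (erase_inj A ha).1 ?_
  have hxa : x ∉ A.erase a := fun h => hx (mem_of_mem_erase h)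
  have hxb : x ∉ A.erase b := fun h => hx (mem_of_mem_erase h)
  rw [← erase_insert hxa, ← erase_insert hxb]
  exact congrArg (·.erase x) h

theorem card_mul_le_card_filter_johnsonCut_mem (hx : x ∈ W) (hS : S ⊆ W.powersetCard k)
    (hSx : ∀ A ∈ S, x ∉ A) : #S * k ≤ #((johnsonCut W k S).filter fun e => x ∈ e.2) := by
  have hcard : ∀ A ∈ S, #(A.image fun a => insert x (A.erase a)) = k := fun A hA => by
    rw [card_image_insert_erase (hSx A hA), (mem_powersetCard.1 (hS hA)).2]
  rw [← sum_const_nat hcard]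
  refine sum_card_le_card_filter_interedges (P := (x ∈ ·)) _ fun A hA B hB => ?_
  obtain ⟨a, ha, rfl⟩ := mem_image.1 hB
  refine ⟨mem_sdiff.2 ⟨insert_erase_mem_powersetCard (hS hA) ha hx (hSx A hA), fun h => ?_⟩,
    johnsonGraph_adj_insert_erase ha (hSx A hA), mem_insert_self _ _⟩
  exact hSx _ h (mem_insert_self _ _)

theorem card_mul_le_card_filter_johnsonCut_notMem (hS : S ⊆ W.powersetCard k)
    (hSx : ∀ A ∈ S, x ∈ A) : #S * (#W - k) ≤ #((johnsonCut W k S).filter fun e => x ∉ e.2) := by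
  have hcard : ∀ A ∈ S, #((W \ A).image fun y => insert y (A.erase x)) = #W - k := fun A hA => by
    obtain ⟨hAW, hAk⟩ := mem_powersetCard.1 (hS hA)
    rw [← hAk, ← card_sdiff_of_subset hAW]
    refine card_image_of_injOn fun y hy y' _ h => (insert_inj fun hy' => ?_).1 h
    exact (mem_sdiff.1 hy).2 (mem_of_mem_erase hy')
  rw [← sum_const_nat hcard]
  refine sum_card_le_card_filter_interedges (P := (x ∉ ·)) _ fun A hA B hB => ?_
  obtain ⟨y, hy, rfl⟩ := mem_image.1 hB
  obtain ⟨hyW, hyA⟩ := mem_sdiff.1 hy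
  have hxB : x ∉ insert y (A.erase x) := by
    simp only [mem_insert, mem_erase, ne_eq, not_true_eq_false, false_and, or_false]
    exact fun h => hyA (h ▸ hSx A hA)
  exact ⟨mem_sdiff.2 ⟨insert_erase_mem_powersetCard (hS hA) (hSx A hA) hyW hyA,
    fun h => hxB (hSx _ h)⟩, johnsonGraph_adj_insert_erase (hSx A hA) hyA, hxB⟩

theorem card_johnsonCut_erase_le :
    #(johnsonCut (W.erase x) k (((W.erase x).powersetCard k).filter (· ∈ S))) ≤
      #((johnsonCut W k S).filter fun e => x ∉ e.2) := by
  refine card_interedges_comap_le (P := (x ∉ ·)) id (fun A hA => ?_) (Set.injOn_id _)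
    fun _ _ _ _ h => h
  obtain ⟨hAW, hAk⟩ := mem_powersetCard.1 hA
  exact ⟨mem_powersetCard.2 ⟨(subset_erase.1 hAW).1, hAk⟩, (subset_erase.1 hAW).2⟩

theorem card_johnsonCut_erase_pred_le (hx : x ∈ W) (hk : 0 < k) :
    #(johnsonCut (W.erase x) (k - 1)
        (((W.erase x).powersetCard (k - 1)).filter (insert x · ∈ S))) ≤
      #((johnsonCut W k S).filter fun e => x ∈ e.2) := by
  have hxL : ∀ A ∈ (W.erase x).powersetCard (k - 1), x ∉ A := fun A hA =>
    (subset_erase.1 (mem_powersetCard.1 hA).1).2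
  refine card_interedges_comap_le (P := (x ∈ ·)) (insert x) (fun A hA => ⟨?_, mem_insert_self _ _⟩)
    (fun A hA B hB h => ?_) (fun A _ B hB h => ?_)
  · obtain ⟨hAW, hAk⟩ := mem_powersetCard.1 hA
    refine mem_powersetCard.2 ⟨insert_subset hx ((subset_erase.1 hAW).1), ?_⟩
    rw [card_insert_of_notMem (subset_erase.1 hAW).2, hAk]
    omega
  · rw [← erase_insert (hxL A hA), ← erase_insert (hxL B hB)]
    exact congrArg (·.erase x) h
  · rwa [johnsonGraph_adj, insert_sdiff_insert, insert_sdiff_insert,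
      sdiff_insert_of_notMem (hxL A ‹_›), sdiff_insert_of_notMem (hxL B hB)]

theorem card_johnsonCut_singleton_le (hA : A ∈ W.powersetCard k) :
    #(johnsonCut W k {A}) ≤ k * (#W - k) := by
  obtain ⟨hAW, hAk⟩ := mem_powersetCard.1 hA
  rw [← hAk, ← card_sdiff_of_subset hAW, ← card_product]
  refine card_le_card_of_surjOn (fun p => (A, insert p.2 (A.erase p.1))) fun e he => ?_
  obtain ⟨h₁, h₂, hadj⟩ := (johnsonGraph α).mem_interedges_iff.1 he
  obtain ⟨a, ha, y, hy, hB⟩ := exists_eq_insert_erase_of_johnsonGraph_adj hadj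
  have hyW : y ∈ W := (mem_powersetCard.1 (mem_sdiff.1 h₂).1).1 (hB ▸ mem_insert_self y _)
  obtain rfl := mem_singleton.1 h₁
  exact ⟨(a, y), mem_product.2 ⟨ha, mem_sdiff.2 ⟨hyW, hy⟩⟩, Prod.ext rfl hB.symm⟩

end JohnsonCut

section JohnsonCutBound

variable {α : Type*} [DecidableEq α] {W A B : Finset α} {k : ℕ} {x : α} {S : Finset (Finset α)}

theorem mul_le_pred_mul_add_mul_pred {k m : ℕ} (hk : 2 ≤ k) (hm : 2 ≤ m) :
    k * m ≤ (k - 1) * m + k * (m - 1) := by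
  obtain ⟨i, rfl⟩ := Nat.exists_eq_add_of_le' hk
  obtain ⟨j, rfl⟩ := Nat.exists_eq_add_of_le' hm
  show (i + 2) * (j + 2) ≤ (i + 1) * (j + 2) + (i + 2) * (j + 1)
  nlinarith

def JohnsonCutBound (W : Finset α) : Prop :=
  ∀ k S, S ⊆ W.powersetCard k → S.Nonempty → (W.powersetCard k \ S).Nonempty →
    k * (#W - k) ≤ #(johnsonCut W k S)

theorem JohnsonCutBound.le_card_filter_johnsonCut_notMem (ih : JohnsonCutBound (W.erase x))
    (hS : S ⊆ W.powersetCard k) (hp : ∃ A ∈ S, x ∉ A)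
    (hp' : ∃ B ∈ W.powersetCard k \ S, x ∉ B) (hx : x ∈ W) :
    k * (#W - 1 - k) ≤ #((johnsonCut W k S).filter fun e => x ∉ e.2) := by
  have mem : ∀ A ∈ W.powersetCard k, x ∉ A → A ∈ (W.erase x).powersetCard k := fun A hA hxA => by
    obtain ⟨hAW, hAk⟩ := mem_powersetCard.1 hA
    exact mem_powersetCard.2 ⟨subset_erase.2 ⟨hAW, hxA⟩, hAk⟩
  obtain ⟨A, hA, hxA⟩ := hp
  obtain ⟨B, hB, hxB⟩ := hp'
  rw [← card_erase_of_mem hx]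
  refine (ih k _ (filter_subset _ _) ⟨A, mem_filter.2 ⟨mem _ (hS hA) hxA, hA⟩⟩
    ⟨B, ?_⟩).trans card_johnsonCut_erase_le
  rw [mem_sdiff] at hB ⊢
  exact ⟨mem _ hB.1 hxB, fun h => hB.2 (mem_filter.1 h).2⟩

theorem JohnsonCutBound.le_card_filter_johnsonCut_mem (ih : JohnsonCutBound (W.erase x))
    (hS : S ⊆ W.powersetCard k) (hq : ∃ A ∈ S, x ∈ A)
    (hq' : ∃ B ∈ W.powersetCard k \ S, x ∈ B) (hx : x ∈ W) :
    (k - 1) * (#W - k) ≤ #((johnsonCut W k S).filter fun e => x ∈ e.2) := by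
  have mem : ∀ A ∈ W.powersetCard k, x ∈ A → A.erase x ∈ (W.erase x).powersetCard (k - 1) :=
    fun A hA hxA => by
      obtain ⟨hAW, hAk⟩ := mem_powersetCard.1 hA
      exact mem_powersetCard.2 ⟨erase_subset_erase x hAW, by rw [card_erase_of_mem hxA, hAk]⟩
  obtain ⟨A, hA, hxA⟩ := hq
  obtain ⟨B, hB, hxB⟩ := hq'
  have hk : 0 < k := (mem_powersetCard.1 (hS hA)).2 ▸ card_pos.2 ⟨x, hxA⟩
  have hcard : #W - k = #(W.erase x) - (k - 1) := by rw [card_erase_of_mem hx]; omega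
  rw [hcard]
  refine (ih (k - 1) _ (filter_subset _ _) ⟨A.erase x, mem_filter.2 ⟨mem _ (hS hA) hxA, ?_⟩⟩
    ⟨B.erase x, ?_⟩).trans (card_johnsonCut_erase_pred_le hx hk)
  · rwa [insert_erase hxA]
  · rw [mem_sdiff] at hB ⊢
    exact ⟨mem _ hB.1 hxB, fun h => hB.2 (insert_erase hxB ▸ (mem_filter.1 h).2)⟩

theorem two_le_of_ne_of_mem_of_mem (hA : A ∈ W.powersetCard k) (hB : B ∈ W.powersetCard k)
    (hAB : A ≠ B) (hxA : x ∈ A) (hxB : x ∈ B) : 2 ≤ k := by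
  obtain ⟨hAW, hAk⟩ := mem_powersetCard.1 hA
  obtain ⟨y, hy⟩ := sdiff_nonempty_of_card_eq_of_ne (hAk.trans (mem_powersetCard.1 hB).2.symm) hAB
  obtain ⟨hyA, hyB⟩ := mem_sdiff.1 hy
  exact hAk ▸ one_lt_card.2 ⟨x, hxA, y, hyA, fun h => hyB (h ▸ hxB)⟩

theorem two_le_card_sub_of_ne_of_notMem_of_notMem (hA : A ∈ W.powersetCard k)
    (hB : B ∈ W.powersetCard k) (hAB : A ≠ B) (hx : x ∈ W) (hxA : x ∉ A) (hxB : x ∉ B) :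
    2 ≤ #W - k := by
  obtain ⟨hAW, hAk⟩ := mem_powersetCard.1 hA
  obtain ⟨hBW, hBk⟩ := mem_powersetCard.1 hB
  obtain ⟨y, hy⟩ := sdiff_nonempty_of_card_eq_of_ne (hBk.trans hAk.symm) hAB.symm
  obtain ⟨hyB, hyA⟩ := mem_sdiff.1 hy
  rw [← hAk, ← card_sdiff_of_subset hAW]
  exact one_lt_card.2 ⟨x, mem_sdiff.2 ⟨hx, hxA⟩, y, mem_sdiff.2 ⟨hBW hyB, hyA⟩,
    fun h => hxB (h ▸ hyB)⟩

theorem JohnsonCutBound.le_card_johnsonCut_of_exists (ih : JohnsonCutBound (W.erase x))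
    (hx : x ∈ W) (hS : S ⊆ W.powersetCard k) (hp : ∃ A ∈ S, x ∉ A) (hq : ∃ A ∈ S, x ∈ A)
    (hp' : ∃ B ∈ W.powersetCard k \ S, x ∉ B) (hq' : ∃ B ∈ W.powersetCard k \ S, x ∈ B) :
    k * (#W - k) ≤ #(johnsonCut W k S) := by
  have ha := ih.le_card_filter_johnsonCut_mem hS hq hq' hx
  have hb := ih.le_card_filter_johnsonCut_notMem hS hp hp' hx
  obtain ⟨A, hA, hxA⟩ := hp
  obtain ⟨A', hA', hxA'⟩ := hq
  obtain ⟨B, hB, hxB⟩ := hp'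
  obtain ⟨B', hB', hxB'⟩ := hq'
  have ne : ∀ {A B}, A ∈ S → B ∈ W.powersetCard k \ S → A ≠ B :=
    fun hA hB h => (mem_sdiff.1 hB).2 (h ▸ hA)
  have hk := two_le_of_ne_of_mem_of_mem (hS hA') (mem_sdiff.1 hB').1 (ne hA' hB') hxA' hxB'
  have hm :=
    two_le_card_sub_of_ne_of_notMem_of_notMem (hS hA) (mem_sdiff.1 hB).1 (ne hA hB) hx hxA hxB
  rw [show #W - 1 - k = #W - k - 1 by omega] at hb
  linarith [card_filter_add_card_filter_not (s := johnsonCut W k S) (fun e => x ∈ e.2),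
    mul_le_pred_mul_add_mul_pred hk hm]

theorem JohnsonCutBound.le_card_johnsonCut_of_forall_notMem (ih : JohnsonCutBound (W.erase x))
    (hx : x ∈ W) (hS : S ⊆ W.powersetCard k) (hSx : ∀ A ∈ S, x ∉ A) (hne : S.Nonempty)
    (hp' : ∃ B ∈ W.powersetCard k \ S, x ∉ B) :
    k * (#W - k) ≤ #(johnsonCut W k S) := by
  have ha := card_mul_le_card_filter_johnsonCut_mem hx hS hSx
  obtain ⟨A, hA⟩ := hne
  have hb := ih.le_card_filter_johnsonCut_notMem hS ⟨A, hA, hSx A hA⟩ hp' hx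
  have hk : k < #W := (mem_powersetCard.1 (hS hA)).2 ▸ card_lt_card
    ⟨(mem_powersetCard.1 (hS hA)).1, fun h => hSx A hA (h hx)⟩
  rw [show #W - k = #W - 1 - k + 1 by omega, mul_add, mul_one]
  nlinarith [Nat.le_mul_of_pos_left k (card_pos.2 ⟨A, hA⟩),
    card_filter_add_card_filter_not (s := johnsonCut W k S) (fun e => x ∈ e.2)]

theorem JohnsonCutBound.le_card_johnsonCut_of_forall_mem (ih : JohnsonCutBound (W.erase x))
    (hx : x ∈ W) (hS : S ⊆ W.powersetCard k) (hSx : ∀ A ∈ S, x ∈ A) (hne : S.Nonempty)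
    (hp' : ∃ B ∈ W.powersetCard k \ S, x ∉ B) :
    k * (#W - k) ≤ #(johnsonCut W k S) := by
  have hb := card_mul_le_card_filter_johnsonCut_notMem hS hSx
  rw [← card_filter_add_card_filter_not (s := johnsonCut W k S) (fun e => x ∈ e.2)]
  obtain ⟨A, hA⟩ := hne
  by_cases hq' : ∃ B ∈ W.powersetCard k \ S, x ∈ B
  · have ha := ih.le_card_filter_johnsonCut_mem hS ⟨A, hA, hSx A hA⟩ hq' hx
    have hk : 0 < k := (mem_powersetCard.1 (hS hA)).2 ▸ card_pos.2 ⟨x, hSx A hA⟩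
    have e : k * (#W - k) = (k - 1) * (#W - k) + (#W - k) := by
      rw [← add_one_mul, Nat.sub_one_add_one hk.ne']
    rw [e]
    nlinarith [Nat.le_mul_of_pos_left (#W - k) (card_pos.2 ⟨A, hA⟩)]
  · push Not at hq'
    obtain ⟨B, hB, hxB⟩ := hp'
    obtain ⟨hBL, hBS⟩ := mem_sdiff.1 hB
    -- the exchange neighbours of `B` that contain `x` all lie in `S`
    have hk : k ≤ #S := by
      rw [← (mem_powersetCard.1 hBL).2, ← card_image_insert_erase hxB]
      refine card_le_card fun A hA => by_contra fun hAS => ?_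
      obtain ⟨a, ha, rfl⟩ := mem_image.1 hA
      exact hq' _ (mem_sdiff.2 ⟨insert_erase_mem_powersetCard hBL ha hx hxB, hAS⟩)
        (mem_insert_self _ _)
    nlinarith [Nat.mul_le_mul_right (#W - k) hk]

theorem johnsonCutBound (W : Finset α) : JohnsonCutBound W := by
  induction W using Finset.strongInduction with
  | H W ih =>
  intro k S hS ⟨A₀, hA₀⟩ ⟨B₀, hB₀⟩
  have hB₀L := (mem_sdiff.1 hB₀).1
  obtain ⟨x, hx⟩ := sdiff_nonempty_of_card_eq_of_ne
    ((mem_powersetCard.1 (hS hA₀)).2.trans (mem_powersetCard.1 hB₀L).2.symm)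
    fun h => (mem_sdiff.1 hB₀).2 (h ▸ hA₀)
  obtain ⟨hxA₀, hxB₀⟩ := mem_sdiff.1 hx
  have hxW : x ∈ W := (mem_powersetCard.1 (hS hA₀)).1 hxA₀
  have ih := ih _ (erase_ssubset hxW)
  by_cases hp : ∃ A ∈ S, x ∉ A
  · by_cases hq' : ∃ B ∈ W.powersetCard k \ S, x ∈ B
    · exact ih.le_card_johnsonCut_of_exists hxW hS hp ⟨A₀, hA₀, hxA₀⟩ ⟨B₀, hB₀, hxB₀⟩ hq'
    · push Not at hq'
      rw [← card_johnsonCut_sdiff hS]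
      refine ih.le_card_johnsonCut_of_forall_notMem hxW sdiff_subset hq' ⟨B₀, hB₀⟩ ?_
      rwa [Finset.sdiff_sdiff_eq_self hS]
  · push Not at hp
    exact ih.le_card_johnsonCut_of_forall_mem hxW hS hp ⟨A₀, hA₀⟩ ⟨B₀, hB₀, hxB₀⟩

end JohnsonCutBound

section TokenGraph

variable {α : Type*} [DecidableEq α] {A B : Finset α} {k : ℕ} {x y : α}

theorem card_sdiff_eq_one_of_symmDiff_eq_pair (hc : #A = #B) (hxy : x ≠ y)
    (h : symmDiff A B = {x, y}) : #(A \ B) = 1 ∧ #(B \ A) = 1 := by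
  have hsum : #(A \ B) + #(B \ A) = 2 := by
    rw [← card_union_of_disjoint disjoint_sdiff_sdiff, ← sup_eq_union, ← symmDiff_def, h,
      card_pair hxy]
  have := card_sdiff_comm hc
  omega

theorem tokenGraph_top_adj {a b : {s : Finset α // #s = k}} :
    (tokenGraph (⊤ : SimpleGraph α) k).Adj a b ↔ (johnsonGraph α).Adj a.1 b.1 := by
  have hc : #a.1 = #b.1 := a.2.trans b.2.symm
  rw [tokenGraph, fromRel_adj, johnsonGraph_adj]
  constructor
  · rintro ⟨-, ⟨x, y, hxy, h⟩ | ⟨x, y, hxy, h⟩⟩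
    · exact card_sdiff_eq_one_of_symmDiff_eq_pair hc hxy h
    · exact (card_sdiff_eq_one_of_symmDiff_eq_pair hc.symm hxy h).symm
  · rintro ⟨hab, hba⟩
    obtain ⟨x, hx⟩ := card_eq_one.1 hab
    obtain ⟨y, hy⟩ := card_eq_one.1 hba
    have hxa : x ∈ a.1 \ b.1 := hx ▸ mem_singleton_self x
    have hyb : y ∈ b.1 \ a.1 := hy ▸ mem_singleton_self y
    refine ⟨fun h => (mem_sdiff.1 hxa).2 (h ▸ (mem_sdiff.1 hxa).1), Or.inl ⟨x, y, ?_, ?_⟩⟩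
    · exact fun h => (mem_sdiff.1 hyb).2 (h ▸ (mem_sdiff.1 hxa).1)
    · rw [symmDiff_def, sup_eq_union, hx, hy]
      rfl

theorem card_interedges_tokenGraph_top [Fintype α] (S : Finset {s : Finset α // #s = k}) :
    #((tokenGraph (⊤ : SimpleGraph α) k).interedges S Sᶜ) =
      #(johnsonCut univ k (S.map (Function.Embedding.subtype _))) := by
  rw [← card_map ((Function.Embedding.subtype _).prodMap (Function.Embedding.subtype _))]
  congr 1
  ext ⟨A, B⟩
  simp only [mem_map, mem_interedges_iff, johnsonCut, mem_sdiff, mem_powersetCard_univ,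
    mem_compl, tokenGraph_top_adj]
  constructor
  · rintro ⟨⟨a, b⟩, ⟨ha, hb, hab⟩, he⟩
    obtain ⟨rfl, rfl⟩ := Prod.mk.inj he
    exact ⟨⟨a, ha, rfl⟩, ⟨b.2, fun ⟨c, hc, hcb⟩ => hb (Subtype.ext hcb ▸ hc)⟩, hab⟩
  · rintro ⟨⟨a, ha, rfl⟩, ⟨hB, hBS⟩, hab⟩
    exact ⟨(a, ⟨B, hB⟩), ⟨ha, fun hb => hBS ⟨_, hb, rfl⟩, hab⟩, rfl⟩

theorem edgeConnected_tokenGraph_top [Fintype α] (hk : k ≤ Fintype.card α) :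
    EdgeConnected (tokenGraph (⊤ : SimpleGraph α) k) (k * (Fintype.card α - k)) := by
  obtain ⟨A, -, hA⟩ := exists_subset_card_eq (s := (univ : Finset α)) (n := k) (by rwa [card_univ])
  have : Nonempty {s : Finset α // #s = k} := ⟨⟨A, hA⟩⟩
  refine edgeConnected_of_le_card_interedges fun S hS ⟨c, hc⟩ => ?_
  rw [card_interedges_tokenGraph_top, ← card_univ]
  refine johnsonCutBound univ k _ (fun C hC => ?_) hS.map
    ⟨c.1, mem_sdiff.2 ⟨mem_powersetCard_univ.2 c.2, fun h => ?_⟩⟩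
  · obtain ⟨c, -, rfl⟩ := mem_map.1 hC
    exact mem_powersetCard_univ.2 c.2
  · obtain ⟨c', hc', hcc'⟩ := mem_map.1 h
    exact mem_compl.1 hc (Subtype.ext hcc' ▸ hc')

theorem EdgeConnected.le_of_tokenGraph_top [Fintype α] {m : ℕ}
    (h : EdgeConnected (tokenGraph (⊤ : SimpleGraph α) k) m) (hk₀ : 0 < k)
    (hk : k < Fintype.card α) : m ≤ k * (Fintype.card α - k) := by
  obtain ⟨A, -, hAk⟩ := exists_subset_card_eq (s := (univ : Finset α)) (n := k)
    (by rw [card_univ]; exact hk.le)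
  have hA : A ∈ univ.powersetCard k := mem_powersetCard_univ.2 hAk
  obtain ⟨x, hx⟩ : A.Nonempty := card_pos.1 (hAk ▸ hk₀)
  obtain ⟨y, -, hy⟩ := exists_mem_notMem_of_card_lt_card (by rwa [hAk, card_univ] : #A < #univ)
  let a : {s : Finset α // #s = k} := ⟨A, hAk⟩
  let b : {s : Finset α // #s = k} :=
    ⟨_, (mem_powersetCard.1 (insert_erase_mem_powersetCard hA hx (mem_univ y) hy)).2⟩
  have hba : b ≠ a := fun h =>
    (johnsonGraph α).ne_of_adj (johnsonGraph_adj_insert_erase hx hy) (congrArg Subtype.val h).symm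
  calc m ≤ #((tokenGraph ⊤ k).interedges {a} {a}ᶜ) :=
        h.le_card_interedges (singleton_nonempty a) ⟨b, by simpa using hba⟩
    _ ≤ k * (Fintype.card α - k) := by
        rw [card_interedges_tokenGraph_top, map_singleton, ← card_univ]
        exact card_johnsonCut_singleton_le hA

end TokenGraph

theorem stmt13 (t k : ℕ) (h2 : 2 ≤ k) (hk : k ≤ t) :
    edgeConn (tokenGraph (⊤ : SimpleGraph (Fin (t + 1))) k) = k * (t - k + 1) := by
  have hdeg : k * (t - k + 1) = k * (Fintype.card (Fin (t + 1)) - k) := by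
    rw [Fintype.card_fin, Nat.sub_add_comm hk]
  rw [hdeg]
  refine IsGreatest.csSup_eq ⟨edgeConnected_tokenGraph_top (by simp; omega), fun m hm => ?_⟩
  exact hm.le_of_tokenGraph_top (by omega) (by simp; omega)
end

section
/- Let G be any connected simple graph of order n ≥ 2 and 1 ≤ k ≤ n−1. Then the k-token graph F_k(G) is connected. -/
open Finset SimpleGraph

open scoped Classical

variable {V : Type*}

/-!
The permutations `σ` of `V` such that every vertex `A` of `F_k(G)` is joined to `σ • A` form a
subgroup of `Perm V`. Swapping the ends of an edge `uv` either fixes a `k`-set or moves one token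
along `uv`, so this subgroup contains those transpositions; since `(a b) = (b c)(a c)(b c)`, it then
contains `(a b)` whenever `a` and `b` are joined by a walk, i.e. every transposition when `G` is
connected. Hence it is all of `Perm V`, which acts transitively on `k`-sets.
-/

open Equiv MulAction
open scoped Pointwise

namespace SimpleGraph

variable {X : Type*} (Γ : SimpleGraph X) (P : Type*) [Group P] [MulAction P X]

def componentPreservingSubgroup : Subgroup P where
  carrier := {g | ∀ x, Γ.Reachable x (g • x)}
  one_mem' x := by rw [one_smul]
  mul_mem' {g h} hg hh x := by rw [mul_smul]; exact (hh x).trans (hg (h • x))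
  inv_mem' {g} hg x := by simpa using (hg (g⁻¹ • x)).symm

variable {Γ P}

theorem connected_of_componentPreservingSubgroup_eq_top [Nonempty X] [IsPretransitive P X]
    (h : Γ.componentPreservingSubgroup P = ⊤) : Γ.Connected := by
  refine ⟨fun x y => ?_⟩
  obtain ⟨g, rfl⟩ := exists_smul_eq P x y
  exact (Subgroup.eq_top_iff' _).1 h g x

end SimpleGraph

section TokenGraph

variable [DecidableEq V] {k : ℕ}

instance : MulAction (Perm V) {s : Finset V // s.card = k} :=
  inferInstanceAs (MulAction (Perm V) (Set.powersetCard V k))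

instance : IsPretransitive (Perm V) {s : Finset V // s.card = k} :=
  Set.powersetCard.isPretransitive

theorem swap_smul_finset_eq_self {u v : V} {A : Finset V} (h : u ∈ A ↔ v ∈ A) :
    swap u v • A = A := by
  ext x
  rw [← swap_inv, Finset.mem_inv_smul_finset_iff, Perm.smul_def, swap_apply_def]
  split_ifs <;> simp_all

theorem symmDiff_swap_smul_finset {u v : V} {A : Finset V} (h : ¬(u ∈ A ↔ v ∈ A)) :
    symmDiff A (swap u v • A) = {u, v} := by
  ext x
  rw [Finset.mem_symmDiff, ← swap_inv, Finset.mem_inv_smul_finset_iff, Perm.smul_def,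
    swap_apply_def]
  split_ifs <;> simp_all <;> tauto

theorem tokenGraph_reachable_swap_smul {G : SimpleGraph V} {u v : V} (huv : G.Adj u v)
    (A : {s : Finset V // s.card = k}) : (tokenGraph G k).Reachable A (swap u v • A) := by
  by_cases h : u ∈ A.1 ↔ v ∈ A.1
  · rw [show swap u v • A = A from Subtype.ext (swap_smul_finset_eq_self h)]
  · have hsymm := symmDiff_swap_smul_finset h
    refine Adj.reachable ((fromRel_adj _ _ _).2 ⟨fun hA => ?_, .inl ⟨u, v, huv, hsymm⟩⟩)
    rw [← show A.1 = swap u v • A.1 from congrArg Subtype.val hA, symmDiff_self] at hsymm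
    exact Finset.insert_ne_empty _ _ hsymm.symm

theorem swap_mem_componentPreservingSubgroup_tokenGraph {G : SimpleGraph V} {u v : V}
    (h : G.Reachable u v) : swap u v ∈ (tokenGraph G k).componentPreservingSubgroup (Perm V) := by
  obtain ⟨w⟩ := h
  induction w with
  | nil => rw [swap_self]; exact one_mem _
  | cons huv _ ih => exact SubmonoidClass.swap_mem_trans _ (tokenGraph_reachable_swap_smul huv) ih

theorem componentPreservingSubgroup_tokenGraph_eq_top [Finite V] {G : SimpleGraph V}
    (hG : G.Connected) : (tokenGraph G k).componentPreservingSubgroup (Perm V) = ⊤ := by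
  rw [eq_top_iff, ← Perm.closure_isSwap, Subgroup.closure_le]
  rintro _ ⟨u, v, -, rfl⟩
  exact swap_mem_componentPreservingSubgroup_tokenGraph (hG u v)

theorem tokenGraph_connected [Fintype V] {G : SimpleGraph V} (hG : G.Connected)
    (hk : k ≤ Fintype.card V) : (tokenGraph G k).Connected := by
  obtain ⟨s, -, hs⟩ := Finset.exists_subset_card_eq (s := Finset.univ) hk
  have : Nonempty {s : Finset V // s.card = k} := ⟨⟨s, hs⟩⟩
  exact connected_of_componentPreservingSubgroup_eq_top
    (componentPreservingSubgroup_tokenGraph_eq_top hG)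

end TokenGraph

theorem stmt16_general [Fintype V] [DecidableEq V] (G : SimpleGraph V) (n k : ℕ)
    (hn : Fintype.card V = n) (hG : G.Connected) (hkn : k ≤ n - 1) :
    (tokenGraph G k).Connected :=
  tokenGraph_connected hG (by omega)

theorem stmt16 [Fintype V] [DecidableEq V] (G : SimpleGraph V) (n k : ℕ)
    (hn : Fintype.card V = n) (h2 : 2 ≤ n) (hG : G.Connected)
    (hk1 : 1 ≤ k) (hkn : k ≤ n - 1) :
    (tokenGraph G k).Connected :=
  stmt16_general G n k hn hG hkn
end
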